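/- arXiv:1205.4458 — 8 statements merged into one kernel-verified Lean document; each statement's English description precedes it below -/
import Mathlib

section
/- For any M ⊆ ℕ_ω^d, the downward closure of the limit closure of M equals the limit closure of the downward closure of M: ↓(Lim M) = Lim(↓M). -/
/-- Vectors over `ℕ∞ = ℕ ∪ {ω}`. -/
abbrev Vec (d : ℕ) := Fin d → ℕ∞

/-- A sequence in `ℕ∞` converges to `l` if it is ultimately constant equal to `l`,
or its integer values form an infinite subsequence tending to infinity and `l = ω`. -/
def ConvTo (s : ℕ → ℕ∞) (l : ℕ∞) : Prop :=
  (∃ N, ∀ n ≥ N, s n = l) ∨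
  (l = ⊤ ∧ {n | s n ≠ ⊤}.Infinite ∧ ∀ B : ℕ, ∃ N, ∀ n ≥ N, (B : ℕ∞) ≤ s n)

/-- Componentwise convergence of a sequence of vectors. -/
def VConvTo {d : ℕ} (s : ℕ → Vec d) (x : Vec d) : Prop :=
  ∀ i, ConvTo (fun n => s n i) (x i)

/-- The limit closure: the set of limits of convergent sequences of elements of `M`. -/
def LimCl {d : ℕ} (M : Set (Vec d)) : Set (Vec d) :=
  {x | ∃ s : ℕ → Vec d, (∀ n, s n ∈ M) ∧ VConvTo s x}

/-- Downward closure for the pointwise order on `ℕ∞^d`. -/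
def dc {d : ℕ} (M : Set (Vec d)) : Set (Vec d) := {x | ∃ y ∈ M, x ≤ y}

/-- The copy of `ℕ^d` inside `ℕ∞^d`. -/
def FinVec (d : ℕ) : Set (Vec d) := {x | ∀ i, x i ≠ ⊤}

/-- The embedding of `ℕ^d` into `ℕ∞^d`. -/
def toOmega {d : ℕ} (x : Fin d → ℕ) : Vec d := fun i => (x i : ℕ∞)

open Filter Topology

instance : FirstCountableTopology ℕ∞ := by
  constructor
  intro a
  rcases eq_or_ne a ⊤ with rfl | h
  · rw [nhds_top_order]; exact inferInstance
  · rw [ENat.nhds_eq_pure h]; exact inferInstance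

theorem convTo_iff_tendsto (s : ℕ → ℕ∞) (l : ℕ∞) :
    ConvTo s l ↔ Tendsto s atTop (𝓝 l) := by
  unfold ConvTo
  rcases eq_or_ne l ⊤ with rfl | h
  · rw [ENat.tendsto_nhds_top_iff_natCast_lt]
    constructor
    · rintro (⟨N, hN⟩ | ⟨-, -, hB⟩) n
      · filter_upwards [eventually_ge_atTop N] with m hm
        rw [hN m hm]; exact ENat.coe_lt_top n
      · obtain ⟨N, hN⟩ := hB (n + 1)
        filter_upwards [eventually_ge_atTop N] with m hm
        calc (n : ℕ∞) < (n + 1 : ℕ) := by exact_mod_cast Nat.lt_succ_self n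
          _ ≤ s m := hN m hm
    · intro h
      by_cases hfin : {n | s n ≠ ⊤}.Finite
      · left
        obtain ⟨N, hN⟩ : ∃ N, ∀ n ∈ {n | s n ≠ ⊤}, n < N := by
          obtain ⟨N, hN⟩ := hfin.bddAbove
          exact ⟨N + 1, fun n hn => Nat.lt_succ_of_le (hN hn)⟩
        exact ⟨N, fun n hn => by by_contra hc; exact absurd hn (Nat.not_le.2 (hN n hc))⟩
      · right
        refine ⟨rfl, hfin, fun B => ?_⟩
        obtain ⟨N, hN⟩ := (h B).exists_forall_of_atTop
        exact ⟨N, fun n hn => (hN n hn).le⟩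
  · rw [ENat.nhds_eq_pure h, tendsto_pure]
    constructor
    · rintro (⟨N, hN⟩ | ⟨hl, -⟩)
      · filter_upwards [eventually_ge_atTop N] with m hm using hN m hm
      · exact absurd hl h
    · intro he
      obtain ⟨N, hN⟩ := he.exists_forall_of_atTop
      exact Or.inl ⟨N, hN⟩

theorem vConvTo_iff_tendsto {d : ℕ} (s : ℕ → Vec d) (x : Vec d) :
    VConvTo s x ↔ Tendsto s atTop (𝓝 x) := by
  rw [tendsto_pi_nhds]
  exact forall_congr' fun i => convTo_iff_tendsto _ _

/-- `↓(Lim M) = Lim(↓M)` for any `M ⊆ ℕ_ω^d`. -/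
theorem stmt_1 {d : ℕ} (M : Set (Vec d)) : dc (LimCl M) = LimCl (dc M) := by
  ext x
  constructor
  · rintro ⟨y, ⟨s, hsM, hsy⟩, hxy⟩
    refine ⟨fun n i => min (s n i) (x i), fun n => ⟨s n, hsM n, fun i => min_le_left _ _⟩, ?_⟩
    intro i
    rw [convTo_iff_tendsto]
    have : Tendsto (fun n => min (s n i) (x i)) atTop (𝓝 (min (y i) (x i))) :=
      ((convTo_iff_tendsto _ _).mp (hsy i)).min tendsto_const_nhds
    rwa [min_eq_right (hxy i)] at this
  · rintro ⟨t, htdc, htx⟩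
    choose u huM htu using htdc
    obtain ⟨y, φ, hφ, huy⟩ := SeqCompactSpace.tendsto_subseq u
    refine ⟨y, ⟨u ∘ φ, fun n => huM _, (vConvTo_iff_tendsto _ _).mpr huy⟩, ?_⟩
    have htx' : Tendsto (t ∘ φ) atTop (𝓝 x) :=
      ((vConvTo_iff_tendsto _ _).mp htx).comp hφ.tendsto_atTop
    intro i
    exact le_of_tendsto_of_tendsto' (tendsto_pi_nhds.mp htx' i) (tendsto_pi_nhds.mp huy i)
      fun n => htu (φ n) i
end

section
/- Every downward closed subset D of ℕ^d admits a finite basis, i.e., there exists a finite set B ⊆ ℕ_ω^d such that Lim D = ↓B. -/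
/-!
A point `x` of `ℕ_ω^d` lies in `Lim D` exactly when every truncation `min x k` lies in `D`.
This set is downward closed and closed under suprema of nonempty chains: up to height `k`,
each coordinate of the supremum is reached by some member of the chain, and finitely many
members have a common upper bound in the chain. By Zorn's lemma every point of `Lim D` lies
below a maximal one, and the maximal points form an antichain in the well-quasi-ordered
`ℕ_ω^d`, hence are finitely many.
-/

open Filter

namespace ENat

lemma exists_mem_min_sSup_le {S : Set ℕ∞} (hS : S.Nonempty) (k : ℕ) :
    ∃ s ∈ S, min (sSup S) k ≤ s := by
  by_contra! hlt
  have hbdd : sSup S < ⊤ :=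
    (sSup_le fun s hs => (hlt s hs).le.trans (min_le_right _ _)).trans_lt (natCast_lt_top k)
  have : Nonempty S := hS.to_subtype
  exact (hlt _ (sSup_mem_of_nonempty_of_lt_top hbdd)).not_ge (min_le_left _ _)

end ENat

lemma IsChain.exists_forall_le_of_finite {α ι : Type*} [Preorder α] [Finite ι] {C : Set α}
    (hC : IsChain (· ≤ ·) C) (hne : C.Nonempty) (f : ι → C) : ∃ c ∈ C, ∀ i, (f i : α) ≤ c := by
  have : Nonempty C := hne.to_subtype
  have : Fintype ι := Fintype.ofFinite ι
  classical
  obtain ⟨c, hc⟩ := hC.directedOn.directed_val.finset_le (Finset.univ.image f)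
  exact ⟨c, c.2, fun i => hc (f i) (Finset.mem_image_of_mem f (Finset.mem_univ i))⟩

lemma convTo_min_natCast (a : ℕ∞) : ConvTo (fun n : ℕ => min a n) a := by
  induction a using ENat.recTopCoe with
  | top =>
    refine Or.inr ⟨rfl, ?_, fun B => ⟨B, fun n hn => by simpa using hn⟩⟩
    simpa using Set.infinite_univ
  | coe m => exact Or.inl ⟨m, fun n hn => min_eq_left (by exact_mod_cast hn)⟩

lemma ConvTo.eventually_min_le {s : ℕ → ℕ∞} {l : ℕ∞} (h : ConvTo s l) (k : ℕ) :
    ∀ᶠ n in atTop, min l k ≤ s n := by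
  rcases h with ⟨N, hN⟩ | ⟨rfl, -, hk⟩
  · exact eventually_atTop.2 ⟨N, fun n hn => (hN n hn).symm ▸ min_le_left _ _⟩
  · obtain ⟨N, hN⟩ := hk k
    exact eventually_atTop.2 ⟨N, fun n hn => (min_le_right _ _).trans (hN n hn)⟩

lemma VConvTo.eventually_min_le {d : ℕ} {s : ℕ → Vec d} {x : Vec d} (h : VConvTo s x) (k : ℕ) :
    ∀ᶠ n in atTop, ∀ i, min (x i) k ≤ s n i :=
  eventually_all.2 fun i => (h i).eventually_min_le k

section Truncate

variable {d : ℕ}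

noncomputable def truncate (x : Vec d) (k : ℕ) : Fin d → ℕ := fun i => (min (x i) k).toNat

lemma natCast_truncate_apply (x : Vec d) (k : ℕ) (i : Fin d) :
    (truncate x k i : ℕ∞) = min (x i) k :=
  ENat.natCast_toNat (ne_top_of_le_ne_top (ENat.natCast_ne_top k) (min_le_right _ _))

lemma toOmega_truncate (x : Vec d) (k : ℕ) : toOmega (truncate x k) = fun i => min (x i) k :=
  funext (natCast_truncate_apply x k)

lemma truncate_le_iff (x : Vec d) (k : ℕ) (u : Fin d → ℕ) :
    truncate x k ≤ u ↔ ∀ i, min (x i) k ≤ u i := by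
  simp only [Pi.le_def, ← Nat.cast_le (α := ℕ∞), natCast_truncate_apply]

lemma truncate_mono {x y : Vec d} (hxy : x ≤ y) (k : ℕ) : truncate x k ≤ truncate y k :=
  (truncate_le_iff x k _).2 fun i =>
    (min_le_min_right _ (hxy i)).trans_eq (natCast_truncate_apply y k i).symm

lemma mem_limCl_toOmega_iff {D : Set (Fin d → ℕ)} (hD : ∀ x y : Fin d → ℕ, x ≤ y → y ∈ D → x ∈ D)
    (x : Vec d) : x ∈ LimCl (toOmega '' D) ↔ ∀ k, truncate x k ∈ D := by
  constructor
  · rintro ⟨s, hs, hconv⟩ k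
    obtain ⟨n, hn⟩ := (hconv.eventually_min_le k).exists
    obtain ⟨u, hu, hsu⟩ := hs n
    rw [← hsu] at hn
    exact hD _ u ((truncate_le_iff x k u).2 hn) hu
  · intro h
    refine ⟨fun n => toOmega (truncate x n), fun n => ⟨_, h n, rfl⟩, fun i => ?_⟩
    simpa only [toOmega_truncate] using convTo_min_natCast (x i)

lemma IsChain.exists_truncate_sSup_le {C : Set (Vec d)} (hC : IsChain (· ≤ ·) C)
    (hne : C.Nonempty) (k : ℕ) : ∃ c ∈ C, truncate (sSup C) k ≤ truncate c k := by
  have hcoord : ∀ i, ∃ c : C, min (sSup C i) k ≤ (c : Vec d) i := fun i => by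
    obtain ⟨_, ⟨c, hc, rfl⟩, hle⟩ := ENat.exists_mem_min_sSup_le (hne.image fun c : Vec d => c i) k
    exact ⟨⟨c, hc⟩, by rwa [sSup_apply_eq_sSup_image]⟩
  choose f hf using hcoord
  obtain ⟨c, hc, hfc⟩ := hC.exists_forall_le_of_finite hne f
  refine ⟨c, hc, (truncate_le_iff _ k _).2 fun i => ?_⟩
  rw [natCast_truncate_apply]
  exact le_min ((hf i).trans (hfc i i)) (min_le_right _ _)

end Truncate

/-- Every downward closed subset `D` of `ℕ^d` admits a finite basis `B ⊆ ℕ_ω^d`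
with `Lim D = ↓B`. -/
theorem stmt_4 {d : ℕ} (D : Set (Fin d → ℕ))
    (hD : ∀ x y : Fin d → ℕ, x ≤ y → y ∈ D → x ∈ D) :
    ∃ B : Set (Vec d), B.Finite ∧ LimCl (toOmega '' D) = dc B := by
  set L : Set (Vec d) := {x | ∀ k, truncate x k ∈ D}
  have hchain : ∀ C ⊆ L, IsChain (· ≤ ·) C → ∀ y ∈ C, ∃ m ∈ L, ∀ c ∈ C, c ≤ m :=
    fun C hCL hC y hy => ⟨sSup C, fun k => by
      obtain ⟨c, hc, hle⟩ := hC.exists_truncate_sSup_le ⟨y, hy⟩ k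
      exact hD _ _ hle (hCL hc k), fun c hc => le_sSup hc⟩
  refine ⟨{x | Maximal (· ∈ L) x},
    WellQuasiOrderedLE.finite_of_isAntichain (setOfPred_maximal_antichain _), ?_⟩
  ext x
  rw [mem_limCl_toOmega_iff hD]
  constructor
  · intro hx
    obtain ⟨m, hxm, hm⟩ := zorn_le_nonempty₀ L hchain x hx
    exact ⟨m, hm, hxm⟩
  · rintro ⟨b, hb, hxb⟩ k
    exact hD _ _ (truncate_mono hxb k) (hb.prop k)
end

section
/- A sequence π = (u_0, ..., u_k) of words over A is productive in the VAS V = (A, δ, x_in) for the word a_1⋯a_k if and only if (1) the partial sums δ(u_0) + ⋯ + δ(u_j) are componentwise nonnegative for every j ∈ {0,...,k}, and (2) the word u_0 a_1 u_1 ⋯ a_k u_k is fireable from x_in. -/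
/-- A vector addition system of dimension `d` over alphabet `α`. -/
structure VAS (α : Type) (d : ℕ) where
  δ : α → Fin d → ℤ
  init : Fin d → ℕ

/-- Displacement of a word: `δ` extended to a monoid morphism on words. -/
def wordδ {α : Type} {d : ℕ} (V : VAS α d) (w : List α) : Fin d → ℤ :=
  (w.map V.δ).sum

/-- A word is fireable from `x` if every intermediate state is nonnegative. -/
def Fireable {α : Type} {d : ℕ} (V : VAS α d) (x : Fin d → ℕ) (w : List α) : Prop :=
  ∀ p, p <+: w → ∀ i, 0 ≤ (x i : ℤ) + wordδ V p i

/-- The reachability set of the VAS `V`. -/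
def PostStar {α : Type} {d : ℕ} (V : VAS α d) : Set (Fin d → ℕ) :=
  {y | ∃ w : List α, Fireable V V.init w ∧ ∀ i, (y i : ℤ) = V.init i + wordδ V w i}

/-- The word `u_0^n a_1 u_1^n ⋯ a_k u_k^n`. -/
def iterWord {α : Type} {k : ℕ} (u : Fin (k+1) → List α) (a : Fin k → α) (n : ℕ) : List α :=
  (List.replicate n (u 0)).flatten ++
    (List.ofFn fun i : Fin k => a i :: (List.replicate n (u i.succ)).flatten).flatten

/-- `π = (u_0, …, u_k)` is productive for `v = a_1 ⋯ a_k` if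
`u_0^n a_1 u_1^n ⋯ a_k u_k^n` is fireable from the initial state for all `n ≥ 1`. -/
def Productive {α : Type} {d : ℕ} (V : VAS α d) {k : ℕ}
    (u : Fin (k+1) → List α) (a : Fin k → α) : Prop :=
  ∀ n ≥ 1, Fireable V V.init (iterWord u a n)

/-!
Induct on `k`, peeling off the last block `a_k u_k^n`. Write `S = δ(u_0) + ⋯ + δ(u_{k-1}) ≥ 0` and
let `x` be the state in which the block starts for `n = 1`. For general `n` it starts at
`x + (n - 1) • S`, and the `m`-th copy of `u_k` (`m < n`) starts at
`x + δ(a_k) + (n - 1 - m) • S + m • (S + δ(u_k))`. So if `S + δ(u_k) ≥ 0`, the block is fireable for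
every `n` once it is for `n = 1`; conversely its end point grows like `n • (S + δ(u_k))` and must
stay nonnegative.
-/

open Finset

theorem nonneg_of_forall_nonneg_add_nsmul {M : Type*} [AddCommGroup M] [LinearOrder M]
    [IsOrderedAddMonoid M] [Archimedean M] {c t : M} (h : ∀ n : ℕ, 0 ≤ c + n • t) : 0 ≤ t := by
  by_contra! ht
  obtain ⟨n, hn⟩ := Archimedean.arch (c - t) (neg_pos.mpr ht)
  have : c + n • t ≤ t := by
    rw [smul_neg, sub_le_iff_le_add] at hn
    simpa [add_comm, neg_add_cancel_left] using add_le_add_right hn (n • t)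
  exact (h n).not_gt (this.trans_lt ht)

section PartialSums

variable {M : Type*} [AddCommMonoid M] {n : ℕ} (f : Fin (n + 1) → M)

theorem Fin.sum_filter_le_castSucc (j : Fin n) :
    ∑ l ∈ univ.filter (· ≤ j.castSucc), f l = ∑ l ∈ univ.filter (· ≤ j), f l.castSucc := by
  simp [sum_filter, Fin.sum_univ_castSucc, (Fin.castSucc_lt_last j).not_ge]

theorem Fin.sum_filter_le_last : ∑ l ∈ univ.filter (· ≤ Fin.last n), f l = ∑ l, f l := by
  simp [Fin.le_last]

end PartialSums

theorem Fin.forall_sum_filter_le_nonneg_iff {M : Type*} [AddCommMonoid M] [PartialOrder M] {n : ℕ}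
    (f : Fin (n + 2) → M) :
    (∀ j, 0 ≤ ∑ l ∈ univ.filter (· ≤ j), f l) ↔
      (∀ j, 0 ≤ ∑ l ∈ univ.filter (· ≤ j), Fin.init f l) ∧
        0 ≤ ∑ l, Fin.init f l + f (Fin.last (n + 1)) := by
  rw [Fin.forall_fin_succ', Fin.sum_filter_le_last, Fin.sum_univ_castSucc]
  simp only [Fin.sum_filter_le_castSucc]
  rfl

section Words

variable {α : Type} {d : ℕ} (V : VAS α d)

@[simp] theorem wordδ_nil : wordδ V [] = 0 := by
  simp [wordδ]

@[simp] theorem wordδ_append (v w : List α) : wordδ V (v ++ w) = wordδ V v + wordδ V w := by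
  simp [wordδ]

@[simp] theorem wordδ_cons (b : α) (w : List α) : wordδ V (b :: w) = V.δ b + wordδ V w := by
  simp [wordδ]

@[simp] theorem wordδ_flatten (W : List (List α)) :
    wordδ V W.flatten = (W.map (wordδ V)).sum := by
  induction W with
  | nil => simp
  | cons w W ih => simp [ih]

theorem wordδ_flatten_replicate (n : ℕ) (v : List α) :
    wordδ V (List.replicate n v).flatten = n • wordδ V v := by
  simp

/-- `Fireable` from an integer start vector, so that start points such as `x + n • s` need no
casts. -/
def FireableInt (x : Fin d → ℤ) (w : List α) : Prop :=
  ∀ p, p <+: w → 0 ≤ x + wordδ V p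

variable {V}

theorem fireable_iff_fireableInt {x : Fin d → ℕ} {w : List α} :
    Fireable V x w ↔ FireableInt V (Nat.cast ∘ x) w := by
  simp [Fireable, FireableInt, Pi.le_def]

namespace FireableInt

variable {x y : Fin d → ℤ} {w : List α}

theorem nonneg (h : FireableInt V x w) : 0 ≤ x := by
  simpa using h [] List.nil_prefix

theorem nonneg_add_wordδ (h : FireableInt V x w) : 0 ≤ x + wordδ V w :=
  h w (List.prefix_refl w)

theorem mono (h : FireableInt V x w) (hxy : x ≤ y) : FireableInt V y w :=
  fun p hp => (h p hp).trans (add_le_add_left hxy _)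

end FireableInt

theorem fireableInt_append {x : Fin d → ℤ} {v w : List α} :
    FireableInt V x (v ++ w) ↔ FireableInt V x v ∧ FireableInt V (x + wordδ V v) w := by
  refine ⟨fun h => ⟨fun p hp => h p (hp.trans (List.prefix_append v w)), fun p hp => ?_⟩, ?_⟩
  · simpa [add_assoc] using h (v ++ p) ((List.prefix_append_right_inj v).mpr hp)
  · rintro ⟨hv, hw⟩ p hp
    rcases List.prefix_or_prefix_of_prefix hp (List.prefix_append v w) with hpv | ⟨q, rfl⟩
    · exact hv p hpv
    · simpa [add_assoc] using hw q ((List.prefix_append_right_inj v).mp hp)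

theorem fireableInt_cons {x : Fin d → ℤ} {b : α} {w : List α} :
    FireableInt V x (b :: w) ↔ 0 ≤ x ∧ FireableInt V (x + V.δ b) w := by
  simp only [FireableInt, List.prefix_cons_iff, forall_eq_or_imp, wordδ_nil, add_zero]
  refine and_congr_right fun _ => ⟨fun h p hp => ?_, ?_⟩
  · simpa [add_assoc] using h (b :: p) ⟨p, rfl, hp⟩
  · rintro h _ ⟨p, rfl, hp⟩
    simpa [add_assoc] using h p hp

/-- The `m`-th copy of `v` starts at `x + (n - m) • s + m • (s + δ v) ≥ x`. -/
theorem FireableInt.flatten_replicate {x s : Fin d → ℤ} {v : List α} (h : FireableInt V x v)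
    (hs : 0 ≤ s) (hsv : 0 ≤ s + wordδ V v) (n : ℕ) :
    FireableInt V (x + n • s) (List.replicate (n + 1) v).flatten := by
  induction n generalizing x with
  | zero => simpa using h
  | succ n ih =>
    rw [List.replicate_succ, List.flatten_cons, fireableInt_append]
    refine ⟨h.mono (le_add_of_nonneg_right (nsmul_nonneg hs _)), ?_⟩
    have := ih (x := x + (s + wordδ V v)) (h.mono (le_add_of_nonneg_right hsv))
    convert this using 1
    rw [succ_nsmul]
    abel

theorem forall_fireableInt_flatten_replicate_iff {x s : Fin d → ℤ} {v : List α} (hs : 0 ≤ s) :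
    (∀ n : ℕ, FireableInt V (x + n • s) (List.replicate (n + 1) v).flatten) ↔
      0 ≤ s + wordδ V v ∧ FireableInt V x v := by
  refine ⟨fun h => ⟨?_, by simpa using h 0⟩, fun h n => h.2.flatten_replicate hs h.1 n⟩
  intro i
  refine nonneg_of_forall_nonneg_add_nsmul (c := x i + wordδ V v i) fun n => ?_
  have hend := (h n).nonneg_add_wordδ
  rw [wordδ_flatten_replicate, succ_nsmul,
    show x + n • s + (n • wordδ V v + wordδ V v) = x + wordδ V v + n • (s + wordδ V v) by
      rw [smul_add]; abel] at hend
  exact hend i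

theorem forall_fireableInt_cons_flatten_replicate_iff {x s : Fin d → ℤ} {b : α} {v : List α}
    (hs : 0 ≤ s) :
    (∀ n : ℕ, FireableInt V (x + (n + 1) • s) (b :: (List.replicate (n + 1) v).flatten)) ↔
      0 ≤ s + wordδ V v ∧ FireableInt V (x + s) (b :: v) := by
  have hshift (n : ℕ) : x + (n + 1) • s + V.δ b = x + s + V.δ b + n • s := by
    rw [succ_nsmul]; abel
  simp only [fireableInt_cons, hshift, forall_and, forall_fireableInt_flatten_replicate_iff hs]
  have hstart : (∀ n : ℕ, 0 ≤ x + (n + 1) • s) ↔ 0 ≤ x + s :=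
    ⟨fun h => by simpa using h 0, fun h n => h.trans <| add_le_add_right
      (show s ≤ (n + 1) • s by rw [succ_nsmul]; exact le_add_of_nonneg_left (nsmul_nonneg hs n)) x⟩
  rw [hstart]
  tauto

end Words

section IteratedWords

variable {α : Type} {d : ℕ} (V : VAS α d) {k : ℕ}

theorem iterWord_of_fin_one (u : Fin 1 → List α) (a : Fin 0 → α) (n : ℕ) :
    iterWord u a n = (List.replicate n (u 0)).flatten := by
  simp [iterWord]

theorem iterWord_snoc (u : Fin (k + 2) → List α) (a : Fin (k + 1) → α) (n : ℕ) :
    iterWord u a n = iterWord (Fin.init u) (Fin.init a) n ++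
      a (Fin.last k) :: (List.replicate n (u (Fin.last (k + 1)))).flatten := by
  rw [iterWord, iterWord, List.ofFn_succ' (n := k)]
  simp [Fin.init]

theorem wordδ_iterWord (u : Fin (k + 1) → List α) (a : Fin k → α) (n : ℕ) :
    wordδ V (iterWord u a n) = ∑ i, V.δ (a i) + n • ∑ l, wordδ V (u l) := by
  simp [iterWord, List.sum_ofFn, Fin.sum_univ_succ, sum_add_distrib, smul_sum]
  abel

end IteratedWords

section Productive

variable {α : Type} {d : ℕ} {V : VAS α d} {k : ℕ}

theorem fireableInt_iterWord_snoc {x : Fin d → ℤ} {u : Fin (k + 2) → List α}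
    {a : Fin (k + 1) → α} {n : ℕ} :
    FireableInt V x (iterWord u a n) ↔ FireableInt V x (iterWord (Fin.init u) (Fin.init a) n) ∧
      FireableInt V (x + ∑ i, V.δ (Fin.init a i) + n • ∑ l, wordδ V (Fin.init u l))
        (a (Fin.last k) :: (List.replicate n (u (Fin.last (k + 1)))).flatten) := by
  rw [iterWord_snoc, fireableInt_append, wordδ_iterWord, add_assoc x]

theorem forall_fireableInt_iterWord_iff {x : Fin d → ℤ} {u : Fin (k + 1) → List α}
    {a : Fin k → α} :
    (∀ n : ℕ, FireableInt V x (iterWord u a (n + 1))) ↔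
      (∀ j, 0 ≤ ∑ l ∈ univ.filter (· ≤ j), wordδ V (u l)) ∧ FireableInt V x (iterWord u a 1) := by
  induction k with
  | zero =>
    simpa [iterWord_of_fin_one, Fin.forall_fin_one] using
      forall_fireableInt_flatten_replicate_iff (x := x) (v := u 0) le_rfl
  | succ k ih =>
    have hlast (hsums : ∀ j, 0 ≤ ∑ l ∈ univ.filter (· ≤ j), wordδ V (Fin.init u l)) :=
      forall_fireableInt_cons_flatten_replicate_iff (V := V) (x := x + ∑ i, V.δ (Fin.init a i))
        (b := a (Fin.last k)) (v := u (Fin.last (k + 1)))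
        (by simpa [Fin.sum_filter_le_last] using hsums (Fin.last k))
    simp only [fireableInt_iterWord_snoc, forall_and, ih,
      Fin.forall_sum_filter_le_nonneg_iff (fun l => wordδ V (u l)), one_smul, List.replicate_one,
      List.flatten_singleton]
    constructor
    · rintro ⟨⟨hsums, hfire⟩, hblock⟩
      obtain ⟨hv, hb⟩ := (hlast hsums).1 hblock
      exact ⟨⟨hsums, hv⟩, hfire, hb⟩
    · rintro ⟨⟨hsums, hv⟩, hfire, hb⟩
      exact ⟨⟨hsums, hfire⟩, (hlast hsums).2 ⟨hv, hb⟩⟩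

theorem productive_iff_forall_fireableInt {u : Fin (k + 1) → List α} {a : Fin k → α} :
    Productive V u a ↔ ∀ n : ℕ, FireableInt V (Nat.cast ∘ V.init) (iterWord u a (n + 1)) := by
  simp only [Productive, fireable_iff_fireableInt]
  exact ⟨fun h n => h (n + 1) n.succ_pos, fun h n hn => Nat.succ_pred_eq_of_pos hn ▸ h _⟩

end Productive

theorem stmt_6_general {α : Type} {d : ℕ} (V : VAS α d) {k : ℕ}
    (u : Fin (k+1) → List α) (a : Fin k → α) :
    Productive V u a ↔
      ((∀ j : Fin (k+1), ∀ i, 0 ≤ ∑ l ∈ Finset.univ.filter (fun l => l ≤ j), wordδ V (u l) i)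
        ∧ Fireable V V.init (iterWord u a 1)) := by
  rw [productive_iff_forall_fireableInt, forall_fireableInt_iterWord_iff, fireable_iff_fireableInt]
  simp only [Pi.le_def, Pi.zero_apply, Finset.sum_apply]

/-- `(u_0, …, u_k)` is productive for `a_1 ⋯ a_k` iff (1) all partial sums
`δ(u_0) + ⋯ + δ(u_j)` are nonnegative and (2) `u_0 a_1 u_1 ⋯ a_k u_k` is fireable
from the initial state. -/
theorem stmt_6 {α : Type} [Finite α] {d : ℕ} (V : VAS α d) {k : ℕ}
    (u : Fin (k+1) → List α) (a : Fin k → α) :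
    Productive V u a ↔
      ((∀ j : Fin (k+1), ∀ i, 0 ≤ ∑ l ∈ Finset.univ.filter (fun l => l ≤ j), wordδ V (u l) i)
        ∧ Fireable V V.init (iterWord u a 1)) :=
  stmt_6_general V u a
end

section
/- For any M ⊆ ℕ_ω^d and f ∈ ℕ_ω^d, filtering commutes with limit closure: filter(Lim M, f) = Lim(filter(M, f)), and consequently ↓_f (Lim M) = Lim(↓_f M). -/
/-- `filter(M, f)`: the elements of `M` agreeing with `f` on the finite components of `f`. -/
def filterSet {d : ℕ} (M : Set (Vec d)) (f : Vec d) : Set (Vec d) :=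
  {x ∈ M | ∀ i, f i ≠ ⊤ → x i = f i}

/-- The `f`-filtered downward closure `↓_f M`. -/
def fdown {d : ℕ} (f : Vec d) (M : Set (Vec d)) : Set (Vec d) := dc (filterSet M f)

open Filter Topology

instance inst_s13 : FirstCountableTopology ℕ∞ := by
  constructor
  intro x
  rcases eq_or_ne x ⊤ with rfl | hx
  · rw [nhds_top_order]
    exact @Filter.iInf.isCountablyGenerated _ _ _ _ (fun l => inferInstance)
  · rw [ENat.nhds_eq_pure hx]; infer_instance

lemma convTo_iff {s : ℕ → ℕ∞} {l : ℕ∞} : ConvTo s l ↔ Tendsto s atTop (𝓝 l) := by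
  constructor
  · rintro (⟨N, hN⟩ | ⟨rfl, -, hB⟩)
    · refine tendsto_const_nhds.congr' ?_
      filter_upwards [eventually_ge_atTop N] with n hn
      exact (hN n hn).symm
    · rw [ENat.tendsto_nhds_top_iff_natCast_lt]
      intro n
      obtain ⟨N, hN⟩ := hB (n + 1)
      filter_upwards [eventually_ge_atTop N] with m hm
      calc (n : ℕ∞) < (n : ℕ∞) + 1 := by
            exact_mod_cast Nat.lt_succ_self n
        _ = ((n + 1 : ℕ) : ℕ∞) := by push_cast; ring
        _ ≤ s m := hN m hm
  · intro h
    rcases eq_or_ne l ⊤ with rfl | hl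
    · rw [ENat.tendsto_nhds_top_iff_natCast_lt] at h
      by_cases hfin : {n | s n ≠ ⊤}.Finite
      · left
        rcases hfin.bddAbove with ⟨N, hN⟩
        refine ⟨N + 1, fun n hn => ?_⟩
        by_contra hne
        exact absurd (hN hne) (by omega)
      · right
        refine ⟨rfl, hfin, fun B => ?_⟩
        obtain ⟨N, hN⟩ := (h B).exists_forall_of_atTop
        exact ⟨N, fun n hn => (hN n hn).le⟩
    · left
      rw [ENat.nhds_eq_pure hl, tendsto_pure] at h
      exact h.exists_forall_of_atTop

lemma vConvTo_iff {d : ℕ} {s : ℕ → Vec d} {x : Vec d} :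
    VConvTo s x ↔ Tendsto s atTop (𝓝 x) := by
  rw [tendsto_pi_nhds]
  exact forall_congr' fun i => convTo_iff

lemma mem_limCl_iff {d : ℕ} {M : Set (Vec d)} {x : Vec d} :
    x ∈ LimCl M ↔ ∃ s : ℕ → Vec d, (∀ n, s n ∈ M) ∧ Tendsto s atTop (𝓝 x) := by
  unfold LimCl
  simp only [Set.mem_setOf_eq, vConvTo_iff]

lemma dc_limCl {d : ℕ} (A : Set (Vec d)) : dc (LimCl A) = LimCl (dc A) := by
  ext x
  constructor
  · rintro ⟨y, hy, hxy⟩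
    rw [mem_limCl_iff] at hy ⊢
    obtain ⟨s, hsA, hs⟩ := hy
    refine ⟨fun n i => min (x i) (s n i), fun n => ⟨s n, hsA n, fun i => min_le_right _ _⟩, ?_⟩
    rw [tendsto_pi_nhds] at hs ⊢
    intro i
    have := (tendsto_const_nhds (x := x i) (f := atTop)).min (hs i)
    rwa [min_eq_left (hxy i)] at this
  · intro hx
    rw [mem_limCl_iff] at hx
    obtain ⟨s, hsA, hs⟩ := hx
    choose y hyA hsy using hsA
    obtain ⟨z, -, φ, hφ, hz⟩ := (isCompact_univ (X := Vec d)).tendsto_subseq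
      (fun n => Set.mem_univ (y n))
    refine ⟨z, mem_limCl_iff.2 ⟨fun n => y (φ n), fun n => hyA (φ n), hz⟩, fun i => ?_⟩
    have hsφ : Tendsto (fun n => s (φ n) i) atTop (𝓝 (x i)) :=
      (tendsto_pi_nhds.1 (hs.comp hφ.tendsto_atTop)) i
    have hzφ : Tendsto (fun n => y (φ n) i) atTop (𝓝 (z i)) := (tendsto_pi_nhds.1 hz) i
    exact le_of_tendsto_of_tendsto' hsφ hzφ fun n => hsy (φ n) i

lemma filter_limCl {d : ℕ} (M : Set (Vec d)) (f : Vec d) :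
    filterSet (LimCl M) f = LimCl (filterSet M f) := by
  ext x
  constructor
  · rintro ⟨hx, hxf⟩
    rw [mem_limCl_iff] at hx ⊢
    obtain ⟨s, hsM, hs⟩ := hx
    have hev : ∀ᶠ n in atTop, ∀ i, f i ≠ ⊤ → s n i = f i := by
      rw [eventually_all]
      intro i
      by_cases hfi : f i ≠ ⊤
      · have hxi : x i = f i := hxf i hfi
        have h1 : Tendsto (fun n => s n i) atTop (𝓝 (x i)) := (tendsto_pi_nhds.1 hs) i
        rw [hxi, ENat.nhds_eq_pure hfi, tendsto_pure] at h1
        filter_upwards [h1] with n hn _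
        exact hn
      · filter_upwards with n hn; exact absurd hn hfi
    obtain ⟨N, hN⟩ := hev.exists_forall_of_atTop
    refine ⟨fun n => s (n + N), fun n => ⟨hsM _, hN (n + N) (by omega)⟩, ?_⟩
    exact hs.comp (tendsto_add_atTop_nat N)
  · intro hx
    rw [mem_limCl_iff] at hx
    obtain ⟨s, hsM, hs⟩ := hx
    refine ⟨mem_limCl_iff.2 ⟨s, fun n => (hsM n).1, hs⟩, fun i hfi => ?_⟩
    have h1 : Tendsto (fun n => s n i) atTop (𝓝 (x i)) := (tendsto_pi_nhds.1 hs) i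
    have h2 : Tendsto (fun n => s n i) atTop (𝓝 (f i)) := by
      have : (fun n => s n i) = fun _ => f i := funext fun n => (hsM n).2 i hfi
      rw [this]; exact tendsto_const_nhds
    exact tendsto_nhds_unique h1 h2

/-- Filtering commutes with limit closure, and consequently so does the filtered
downward closure: `filter(Lim M, f) = Lim (filter(M, f))` and `↓_f(Lim M) = Lim(↓_f M)`. -/
theorem stmt_13 {d : ℕ} (M : Set (Vec d)) (f : Vec d) :
    filterSet (LimCl M) f = LimCl (filterSet M f) ∧
    fdown f (LimCl M) = LimCl (fdown f M) := by
  refine ⟨filter_limCl M f, ?_⟩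
  rw [fdown, filter_limCl M f, dc_limCl, fdown]
end

section
/- Let V = (A, δ, x_in) be a VAS, P ⊆ {1,...,d}, and V_P the VAS over alphabet A ⊎ {b_1,...,b_d} extending δ by δ_P(b_i) = 0 if i ∈ P and δ_P(b_i) = −e_i if i ∉ P. Then the ≤_P-downward closure of Post*(V) equals Post*(V_P). -/
namespace Stmt14Aux

lemma wordδ_nil {α : Type} {d : ℕ} (V : VAS α d) : wordδ V [] = 0 := rfl

lemma wordδ_cons {α : Type} {d : ℕ} (V : VAS α d) (a : α) (w : List α) :
    wordδ V (a :: w) = V.δ a + wordδ V w := by simp [wordδ]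

lemma wordδ_append {α : Type} {d : ℕ} (V : VAS α d) (u v : List α) :
    wordδ V (u ++ v) = wordδ V u + wordδ V v := by simp [wordδ]

lemma exists_prefix_filterMap {β γ : Type} (f : β → Option γ) :
    ∀ (w : List β) (q : List γ), q <+: w.filterMap f → ∃ p, p <+: w ∧ p.filterMap f = q := by
  intro w
  induction w with
  | nil => intro q hq; simp at hq; exact ⟨[], by simp [hq]⟩
  | cons b w ih =>
    intro q hq
    cases hfb : f b with
    | none =>
      rw [List.filterMap_cons, hfb] at hq
      obtain ⟨p, hp, hpq⟩ := ih q hq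
      exact ⟨b :: p, List.cons_prefix_cons.mpr ⟨rfl, hp⟩, by simp [List.filterMap_cons, hfb, hpq]⟩
    | some c =>
      rw [List.filterMap_cons, hfb] at hq
      cases q with
      | nil => exact ⟨[], List.nil_prefix, rfl⟩
      | cons c' q =>
        rw [List.cons_prefix_cons] at hq
        obtain ⟨rfl, hq⟩ := hq
        obtain ⟨p, hp, hpq⟩ := ih q hq
        exact ⟨b :: p, List.cons_prefix_cons.mpr ⟨rfl, hp⟩, by simp [List.filterMap_cons, hfb, hpq]⟩

end Stmt14Aux

namespace Stmt14Aux

variable {α : Type} {d : ℕ}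

/-- Comparison: deleting the extra letters only increases displacement,
with equality on coordinates in `P`. -/
lemma wordδ_proj (V : VAS α d) (P : Finset (Fin d)) (VP : VAS (α ⊕ Fin d) d)
    (hδ : VP.δ = Sum.elim V.δ
      (fun i j => if i ∈ P then 0 else (if j = i then (-1 : ℤ) else 0))) :
    ∀ (w : List (α ⊕ Fin d)) (i : Fin d),
      wordδ VP w i ≤ wordδ V (w.filterMap (Sum.elim some (fun _ => none))) i ∧
      (i ∈ P → wordδ VP w i = wordδ V (w.filterMap (Sum.elim some (fun _ => none))) i) := by
  intro w
  induction w with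
  | nil => intro i; simp [wordδ_nil]
  | cons a w ih =>
    intro i
    obtain ⟨ih1, ih2⟩ := ih i
    cases a with
    | inl a =>
      have : (List.filterMap (Sum.elim some (fun _ => none)) (Sum.inl a :: w)) =
          a :: List.filterMap (Sum.elim some (fun _ => none)) w := by
        simp [List.filterMap_cons]
      rw [this, wordδ_cons, wordδ_cons, hδ]
      constructor
      · simpa using ih1
      · intro hi; simpa using ih2 hi
    | inr j =>
      have : (List.filterMap (Sum.elim some (fun _ => none)) (Sum.inr j :: w)) =
          List.filterMap (Sum.elim some (fun _ => none)) w := by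
        simp [List.filterMap_cons]
      rw [this, wordδ_cons, hδ]
      have hle : Sum.elim V.δ
          (fun i j => if i ∈ P then 0 else (if j = i then (-1 : ℤ) else 0)) (Sum.inr j) i ≤ 0 := by
        simp only [Sum.elim_inr]
        split_ifs <;> simp
      constructor
      · have := ih1; simp only [Pi.add_apply]; omega
      · intro hi
        have h0 : Sum.elim V.δ
            (fun i j => if i ∈ P then 0 else (if j = i then (-1 : ℤ) else 0)) (Sum.inr j) i = 0 := by
          simp only [Sum.elim_inr]
          split
          · rfl
          · split
            · rename_i h1 h2; exact absurd (h2 ▸ hi) h1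
            · rfl
        simp only [Pi.add_apply, h0, zero_add]
        exact ih2 hi

/-- `Post*(V) ⊆ Post*(V_P)`. -/
lemma postStar_subset (V : VAS α d) (P : Finset (Fin d)) (VP : VAS (α ⊕ Fin d) d)
    (hδ : VP.δ = Sum.elim V.δ
      (fun i j => if i ∈ P then 0 else (if j = i then (-1 : ℤ) else 0)))
    (hinit : VP.init = V.init) :
    PostStar V ⊆ PostStar VP := by
  rintro m ⟨w, hfire, heq⟩
  have hmap : ∀ u : List α, wordδ VP (u.map Sum.inl) = wordδ V u := by
    intro u; simp [wordδ, List.map_map, Function.comp_def, hδ]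
  refine ⟨w.map Sum.inl, ?_, ?_⟩
  · intro p hp i
    obtain ⟨q, hq, rfl⟩ := exists_prefix_filterMap (some ∘ Sum.inl) w p
      (by rwa [List.filterMap_eq_map])
    rw [List.filterMap_eq_map, hmap, hinit]
    exact hfire q hq i
  · intro i; rw [hmap, hinit]; exact heq i

/-- `Post*(V_P)` is downward closed off `P` : one step. -/
lemma down_step (P : Finset (Fin d)) (VP : VAS (α ⊕ Fin d) d) {V : VAS α d}
    (hδ : VP.δ = Sum.elim V.δ
      (fun i j => if i ∈ P then 0 else (if j = i then (-1 : ℤ) else 0)))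
    {y : Fin d → ℕ} (hy : y ∈ PostStar VP) (i : Fin d) (hi : i ∉ P) (hpos : 0 < y i) :
    Function.update y i (y i - 1) ∈ PostStar VP := by
  obtain ⟨w, hfire, heq⟩ := hy
  have hb : ∀ j, VP.δ (Sum.inr i) j = if j = i then (-1 : ℤ) else 0 := by
    intro j; rw [hδ]; simp [hi]
  refine ⟨w ++ [Sum.inr i], ?_, ?_⟩
  · intro p hp j
    rcases List.prefix_concat_iff.mp hp with h | h
    · subst h
      rw [wordδ_append]
      have hδb : wordδ VP [Sum.inr i] j = if j = i then (-1 : ℤ) else 0 := by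
        rw [wordδ_cons]; simp [hb j, wordδ_nil]
      have := heq j
      simp only [Pi.add_apply, hδb]
      by_cases hji : j = i
      · subst hji; simp only [if_pos rfl]; omega
      · simp only [if_neg hji]; omega
    · exact hfire p h j
  · intro j
    rw [wordδ_append]
    have hδb : wordδ VP [Sum.inr i] j = if j = i then (-1 : ℤ) else 0 := by
      rw [wordδ_cons]; simp [hb j, wordδ_nil]
    have := heq j
    by_cases hji : j = i
    · subst hji
      simp only [Function.update_self, Pi.add_apply, hδb, if_pos rfl]
      push_cast [Nat.cast_sub (by omega : 1 ≤ y j)]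
      omega
    · simp only [Function.update_of_ne hji, Pi.add_apply, hδb, if_neg hji]
      omega

lemma down_closed (P : Finset (Fin d)) (VP : VAS (α ⊕ Fin d) d) {V : VAS α d}
    (hδ : VP.δ = Sum.elim V.δ
      (fun i j => if i ∈ P then 0 else (if j = i then (-1 : ℤ) else 0))) :
    ∀ (n : ℕ) (x m : Fin d → ℕ), m ∈ PostStar VP → (∀ i ∈ P, x i = m i) →
      (∀ i ∉ P, x i ≤ m i) → (∑ i, (m i - x i)) = n → x ∈ PostStar VP := by
  intro n
  induction n with
  | zero =>
    intro x m hm hP hle hsum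
    have : x = m := by
      funext i
      have h0 : m i - x i = 0 := by
        by_contra h
        exact absurd hsum (by
          have : 0 < ∑ j, (m j - x j) :=
            Finset.sum_pos' (fun _ _ => Nat.zero_le _) ⟨i, Finset.mem_univ i, by omega⟩
          omega)
      by_cases hiP : i ∈ P
      · exact hP i hiP
      · have := hle i hiP; omega
    rw [this]; exact hm
  | succ n ih =>
    intro x m hm hP hle hsum
    have hex : ∃ i, x i < m i := by
      by_contra h
      push_neg at h
      have : ∑ i, (m i - x i) = 0 := Finset.sum_eq_zero (fun i _ => by have := h i; omega)
      omega
    obtain ⟨i, hi⟩ := hex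
    have hiP : i ∉ P := fun h => by have := hP i h; omega
    have hm' := down_step P VP hδ hm i hiP (by omega)
    set m' := Function.update m i (m i - 1) with hm'def
    refine ih x m' hm' ?_ ?_ ?_
    · intro j hj
      have : j ≠ i := fun h => hiP (h ▸ hj)
      rw [hm'def, Function.update_of_ne this]
      exact hP j hj
    · intro j hj
      by_cases hji : j = i
      · subst hji; rw [hm'def, Function.update_self]; omega
      · rw [hm'def, Function.update_of_ne hji]; exact hle j hj
    · have h1 : ∑ j, (m j - x j) = (m i - x i) + ∑ j ∈ Finset.univ.erase i, (m j - x j) :=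
        (Finset.add_sum_erase _ _ (Finset.mem_univ i)).symm
      have h2 : ∑ j, (m' j - x j) = (m' i - x i) + ∑ j ∈ Finset.univ.erase i, (m' j - x j) :=
        (Finset.add_sum_erase _ _ (Finset.mem_univ i)).symm
      have h3 : ∑ j ∈ Finset.univ.erase i, (m' j - x j)
          = ∑ j ∈ Finset.univ.erase i, (m j - x j) := by
        refine Finset.sum_congr rfl (fun j hj => ?_)
        rw [hm'def, Function.update_of_ne (Finset.ne_of_mem_erase hj)]
      have h4 : m' i = m i - 1 := by rw [hm'def, Function.update_self]
      omega

end Stmt14Aux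


/-- Let `V_P` extend `V` by fresh actions `b_1, …, b_d` with `δ_P(b_i) = 0` if `i ∈ P`
and `δ_P(b_i) = -e_i` if `i ∉ P`. Then the `≤_P`-downward closure of `Post*(V)`
equals `Post*(V_P)`. -/
theorem stmt_14 {α : Type} [Finite α] {d : ℕ} (V : VAS α d) (P : Finset (Fin d))
    (VP : VAS (α ⊕ Fin d) d)
    (hδ : VP.δ = Sum.elim V.δ
      (fun i j => if i ∈ P then 0 else (if j = i then (-1 : ℤ) else 0)))
    (hinit : VP.init = V.init) :
    {x : Fin d → ℕ | ∃ m ∈ PostStar V, (∀ i ∈ P, x i = m i) ∧ (∀ i ∉ P, x i ≤ m i)}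
      = PostStar VP := by
  ext x
  simp only [Set.mem_setOf_eq]
  constructor
  · rintro ⟨m, hm, hP, hle⟩
    exact Stmt14Aux.down_closed P VP hδ _ x m
      (Stmt14Aux.postStar_subset V P VP hδ hinit hm) hP hle rfl
  · rintro ⟨w, hfire, heq⟩
    set w' := w.filterMap (Sum.elim some (fun _ => none)) with hw'
    have cmp := Stmt14Aux.wordδ_proj V P VP hδ
    have hxle : ∀ i, (x i : ℤ) ≤ (V.init i : ℤ) + wordδ V w' i := by
      intro i
      have h := heq i
      rw [hinit] at h
      have h2 := (cmp w i).1
      rw [← hw'] at h2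
      omega
    set m : Fin d → ℕ := fun i => (V.init i + wordδ V w' i).toNat with hm
    have hmcast : ∀ i, ((m i : ℕ) : ℤ) = (V.init i : ℤ) + wordδ V w' i := by
      intro i
      exact Int.toNat_of_nonneg ((x i).cast_nonneg.trans (hxle i))
    refine ⟨m, ⟨w', ?_, hmcast⟩, ?_, ?_⟩
    · intro q hq i
      obtain ⟨p, hp, hpq⟩ := Stmt14Aux.exists_prefix_filterMap _ w q hq
      have h1 := hfire p hp i
      rw [hinit] at h1
      have h2 := (cmp p i).1
      rw [hpq] at h2
      omega
    · intro i hiP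
      have h := heq i
      rw [hinit] at h
      have h2 := (cmp w i).2 hiP
      rw [← hw'] at h2
      have h3 := hmcast i
      omega
    · intro i _
      have h3 := hmcast i
      have := hxle i
      omega
end

section
/- For a VAS with one zero-test V_z, if Reach(M) denotes the union over x ∈ M of the reachability sets of V_z started at x, then for every M ⊆ ℕ_ω^d: Lim Reach(Lim M) = Lim Reach(M). -/
/-- A vector addition system with one zero-test, of dimension `d` over alphabet `α`.
The zero-test action is represented by `none : Option α`, and tests component `0`. -/
structure VAS0 (α : Type) (d : ℕ) where
  δ : α → Fin d → ℤ
  δz : Fin d → ℤ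
  init : Fin d → ℕ

/-- One step of a `VAS0` on states in `ℕ^d`. -/
def VAS0.Step {α : Type} {d : ℕ} [NeZero d] (V : VAS0 α d)
    (x : Fin d → ℕ) : Option α → (Fin d → ℕ) → Prop
  | some a, y => ∀ i, (y i : ℤ) = x i + V.δ a i
  | none, y => x 0 = 0 ∧ ∀ i, (y i : ℤ) = x i + V.δz i

/-- Reachability along a word for a `VAS0` on states in `ℕ^d`. -/
def VAS0.ReachW {α : Type} {d : ℕ} [NeZero d] (V : VAS0 α d) :
    (Fin d → ℕ) → List (Option α) → (Fin d → ℕ) → Prop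
  | x, [], y => x = y
  | x, t :: w, y => ∃ z, V.Step x t z ∧ V.ReachW z w y

/-- `y = x + v ≥ 0` on generalized states in `ℕ_ω^d`, where `ω` components are absorbing. -/
def StepVec {d : ℕ} (v : Fin d → ℤ) (x y : Vec d) : Prop :=
  ∀ i, (x i = ⊤ ∧ y i = ⊤) ∨
    (∃ m n : ℕ, x i = (m : ℕ∞) ∧ y i = (n : ℕ∞) ∧ (n : ℤ) = m + v i)

/-- One step of a `VAS0` on generalized states in `ℕ_ω^d`; the zero-test `none`
requires component `0` to equal `0`. -/
def VAS0.StepOm {α : Type} {d : ℕ} [NeZero d] (V : VAS0 α d)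
    (x : Vec d) : Option α → Vec d → Prop
  | some a, y => StepVec (V.δ a) x y
  | none, y => x 0 = 0 ∧ StepVec V.δz x y

/-- Reachability along a word on generalized states. -/
def VAS0.ReachWOm {α : Type} {d : ℕ} [NeZero d] (V : VAS0 α d) :
    Vec d → List (Option α) → Vec d → Prop
  | x, [], y => x = y
  | x, t :: w, y => ∃ z, V.StepOm x t z ∧ V.ReachWOm z w y

/-- The reachability set of `V` started at the generalized state `x`. -/
def VAS0.PostStarOm {α : Type} {d : ℕ} [NeZero d] (V : VAS0 α d) (x : Vec d) : Set (Vec d) :=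
  {y | ∃ w : List (Option α), V.ReachWOm x w y}

/-- `Reach(M)`: the union over `x ∈ M` of the reachability sets of `V_z` started at `x`. -/
def ReachSet {α : Type} {d : ℕ} [NeZero d] (V : VAS0 α d) (M : Set (Vec d)) : Set (Vec d) :=
  ⋃ x ∈ M, V.PostStarOm x

namespace Stmt16Aux

variable {α : Type} {d : ℕ} [NeZero d]

/-- `y` approximates `x`: equal on finite components, at least `B` on `⊤` components. -/
def Apx {d : ℕ} (B : ℕ) (x y : Vec d) : Prop :=
  ∀ i, (x i ≠ ⊤ → y i = x i) ∧ (x i = ⊤ → (B : ℕ∞) ≤ y i)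

lemma apx_mono {B B' : ℕ} (h : B ≤ B') {x y : Vec d} (ha : Apx B' x y) : Apx B x y := by
  intro i
  refine ⟨(ha i).1, fun ht => le_trans ?_ ((ha i).2 ht)⟩
  exact_mod_cast Nat.cast_le.mpr h

lemma apx_trans {B C : ℕ} (hBC : B ≤ C) {x y z : Vec d}
    (h1 : Apx B x y) (h2 : Apx C y z) : Apx B x z := by
  intro i
  constructor
  · intro hx
    have hy : y i = x i := (h1 i).1 hx
    rw [(h2 i).1 (by rw [hy]; exact hx), hy]
  · intro hx
    have hy : (B : ℕ∞) ≤ y i := (h1 i).2 hx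
    by_cases hyt : y i = ⊤
    · calc (B : ℕ∞) ≤ (C : ℕ∞) := by exact_mod_cast Nat.cast_le.mpr hBC
        _ ≤ z i := (h2 i).2 hyt
    · rw [(h2 i).1 hyt]; exact hy

lemma stepvec_apx {v : Fin d → ℤ} {c B : ℕ} (hc : ∀ i, (v i).natAbs ≤ c)
    {x m x' : Vec d} (h : StepVec v x m) (ha : Apx (B + c) x x') :
    ∃ m', StepVec v x' m' ∧ Apx B m m' := by
  classical
  have key : ∀ i, ∃ mi : ℕ∞,
      ((x' i = ⊤ ∧ mi = ⊤) ∨ (∃ a b : ℕ, x' i = (a : ℕ∞) ∧ mi = (b : ℕ∞) ∧ (b : ℤ) = a + v i))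
      ∧ (m i ≠ ⊤ → mi = m i) ∧ (m i = ⊤ → (B : ℕ∞) ≤ mi) := by
    intro i
    have habs := hc i
    rcases h i with ⟨hx, hm⟩ | ⟨a, b, hxa, hmb, heq⟩
    · by_cases hxp : x' i = ⊤
      · exact ⟨⊤, Or.inl ⟨hxp, rfl⟩, fun hne => absurd hm hne, fun _ => le_top⟩
      · set k := (x' i).toNat with hkdef
        have hk : (k : ℕ∞) = x' i := ENat.coe_toNat hxp
        have hge : ((B + c : ℕ) : ℕ∞) ≤ x' i := (ha i).2 hx
        have hgek : B + c ≤ k := by rw [← hk] at hge; exact_mod_cast hge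
        refine ⟨((((k : ℤ) + v i).toNat : ℕ) : ℕ∞), Or.inr ⟨k, ((k : ℤ) + v i).toNat,
          hk.symm, rfl, Int.toNat_of_nonneg (by omega)⟩, fun hne => absurd hm hne, fun _ => ?_⟩
        have hB : B ≤ ((k : ℤ) + v i).toNat := by omega
        exact_mod_cast Nat.cast_le.mpr hB
    · have hxne : x i ≠ ⊤ := by rw [hxa]; simp
      have hx'a : x' i = (a : ℕ∞) := by rw [(ha i).1 hxne, hxa]
      refine ⟨(b : ℕ∞), Or.inr ⟨a, b, hx'a, rfl, heq⟩, fun _ => hmb.symm, fun hmt => ?_⟩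
      rw [hmb] at hmt; simp at hmt
  choose m' hm' using key
  exact ⟨m', fun i => (hm' i).1, fun i => (hm' i).2⟩

/-- The displacement of a letter. -/
def dlt (V : VAS0 α d) : Option α → Fin d → ℤ
  | some a => V.δ a
  | none => V.δz

def cost (V : VAS0 α d) (t : Option α) : ℕ :=
  Finset.univ.sup fun i => (dlt V t i).natAbs

def wcost (V : VAS0 α d) (w : List (Option α)) : ℕ := (w.map (cost V)).sum

lemma cost_le (V : VAS0 α d) (t : Option α) (i : Fin d) :
    (dlt V t i).natAbs ≤ cost V t :=
  Finset.le_sup (f := fun i => (dlt V t i).natAbs) (Finset.mem_univ i)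

lemma step_apx {V : VAS0 α d} {t : Option α} {x m x' : Vec d} {B : ℕ}
    (h : V.StepOm x t m) (ha : Apx (B + cost V t) x x') :
    ∃ m', V.StepOm x' t m' ∧ Apx B m m' := by
  cases t with
  | some a =>
      exact stepvec_apx (fun i => cost_le V (some a) i) h ha
  | none =>
      obtain ⟨h0, hs⟩ := h
      obtain ⟨m', hm', ham⟩ := stepvec_apx (fun i => cost_le V none i) hs ha
      refine ⟨m', ⟨?_, hm'⟩, ham⟩
      have : x 0 ≠ ⊤ := by rw [h0]; simp
      rw [(ha 0).1 this, h0]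

lemma reach_apx {V : VAS0 α d} {w : List (Option α)} {x z x' : Vec d} {B : ℕ}
    (h : V.ReachWOm x w z) (ha : Apx (B + wcost V w) x x') :
    ∃ z', V.ReachWOm x' w z' ∧ Apx B z z' := by
  induction w generalizing x x' with
  | nil =>
      have hxz : x = z := h
      subst hxz
      exact ⟨x', rfl, ha⟩
  | cons t w ih =>
      obtain ⟨mm, hstep, hrest⟩ := h
      have hEq : B + wcost V (t :: w) = (B + wcost V w) + cost V t := by
        simp [wcost]; ring
      rw [hEq] at ha
      obtain ⟨m', hm', ham⟩ := step_apx hstep ha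
      obtain ⟨z', hz', haz⟩ := ih hrest ham
      exact ⟨z', ⟨m', hm', hz'⟩, haz⟩

lemma apx_of_conv {s : ℕ → Vec d} {y : Vec d} (h : VConvTo s y) (B : ℕ) :
    ∃ N, ∀ n ≥ N, Apx B y (s n) := by
  have key : ∀ i : Fin d, ∃ N, ∀ n ≥ N,
      ((y i ≠ ⊤ → s n i = y i) ∧ (y i = ⊤ → (B : ℕ∞) ≤ s n i)) := by
    intro i
    rcases h i with ⟨N, hN⟩ | ⟨htop, _, hB⟩
    · by_cases hy : y i = ⊤
      · exact ⟨N, fun n hn => ⟨fun hy' => absurd hy hy', fun _ => by have h2 : s n i = y i := hN n hn; rw [h2, hy]; exact le_top⟩⟩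
      · exact ⟨N, fun n hn => ⟨fun _ => hN n hn, fun hy' => absurd hy' hy⟩⟩
    · obtain ⟨N, hN⟩ := hB B
      exact ⟨N, fun n hn => ⟨fun hy' => absurd htop hy', fun _ => hN n hn⟩⟩
  choose N hN using key
  exact ⟨Finset.univ.sup N, fun n hn i =>
    hN i n (le_trans (Finset.le_sup (Finset.mem_univ i)) hn)⟩

lemma conv_top {f : ℕ → ℕ∞} (h : ∀ B : ℕ, ∃ N, ∀ n ≥ N, (B : ℕ∞) ≤ f n) :
    ConvTo f ⊤ := by
  by_cases hI : {n | f n ≠ ⊤}.Infinite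
  · exact Or.inr ⟨rfl, hI, h⟩
  · left
    have hf := Set.not_infinite.mp hI
    rcases hf.bddAbove with ⟨mb, hmb⟩
    refine ⟨mb + 1, fun n hn => ?_⟩
    by_contra hne
    have := hmb hne
    omega

lemma conv_of_apx {u : ℕ → Vec d} {z : Vec d}
    (h : ∀ B : ℕ, ∃ N, ∀ n ≥ N, Apx B z (u n)) : VConvTo u z := by
  intro i
  by_cases hzt : z i = ⊤
  · rw [hzt]
    exact conv_top (fun B => (h B).imp fun N hN n hn => (hN n hn i).2 hzt)
  · obtain ⟨N, hN⟩ := h 0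
    exact Or.inl ⟨N, fun n hn => (hN n hn i).1 hzt⟩

lemma reachLim_subset {V : VAS0 α d} {M : Set (Vec d)} :
    ReachSet V (LimCl M) ⊆ LimCl (ReachSet V M) := by
  intro z hz
  simp only [ReachSet, Set.mem_iUnion] at hz
  obtain ⟨y, hy, w, hw⟩ := hz
  obtain ⟨s, hsM, hsy⟩ := hy
  have key : ∀ B : ℕ, ∃ z', z' ∈ ReachSet V M ∧ Apx B z z' := by
    intro B
    obtain ⟨N, hN⟩ := apx_of_conv hsy (B + wcost V w)
    obtain ⟨z', hz', haz⟩ := reach_apx hw (hN N le_rfl)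
    exact ⟨z', Set.mem_iUnion.mpr ⟨s N, Set.mem_iUnion.mpr ⟨hsM N, w, hz'⟩⟩, haz⟩
  choose u hu hau using key
  exact ⟨u, hu, conv_of_apx fun B => ⟨B, fun n hn => apx_mono hn (hau n)⟩⟩

lemma limcl_idem {A : Set (Vec d)} : LimCl (LimCl A) ⊆ LimCl A := by
  rintro x ⟨s, hs, hsx⟩
  have key : ∀ n : ℕ, ∃ z, z ∈ A ∧ Apx n (s n) z := by
    intro n
    obtain ⟨t, ht, hts⟩ := hs n
    obtain ⟨K, hK⟩ := apx_of_conv hts n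
    exact ⟨t K, ht K, hK K le_rfl⟩
  choose u hu hau using key
  refine ⟨u, hu, conv_of_apx fun B => ?_⟩
  obtain ⟨N, hN⟩ := apx_of_conv hsx B
  exact ⟨max N B, fun n hn =>
    apx_trans (le_of_max_le_right hn) (hN n (le_of_max_le_left hn)) (hau n)⟩

lemma limcl_mono {A B : Set (Vec d)} (h : A ⊆ B) : LimCl A ⊆ LimCl B := by
  rintro x ⟨s, hs, hsx⟩
  exact ⟨s, fun n => h (hs n), hsx⟩

lemma subset_limcl {A : Set (Vec d)} : A ⊆ LimCl A :=
  fun x hx => ⟨fun _ => x, fun _ => hx, fun i => Or.inl ⟨0, fun _ _ => rfl⟩⟩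

lemma reachset_mono {V : VAS0 α d} {A B : Set (Vec d)} (h : A ⊆ B) :
    ReachSet V A ⊆ ReachSet V B :=
  Set.biUnion_subset_biUnion_left h

end Stmt16Aux

/-- For a VAS with one zero-test (whose zero-test does not change the tested component),
`Lim Reach(Lim M) = Lim Reach(M)` for every `M ⊆ ℕ_ω^d`. -/
theorem stmt_16 {α : Type} [Finite α] {d : ℕ} [NeZero d] (V : VAS0 α d)
    (hz : V.δz 0 = 0) (M : Set (Vec d)) :
    LimCl (ReachSet V (LimCl M)) = LimCl (ReachSet V M) := by
  apply subset_antisymm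
  · exact (Stmt16Aux.limcl_mono Stmt16Aux.reachLim_subset).trans Stmt16Aux.limcl_idem
  · exact Stmt16Aux.limcl_mono (Stmt16Aux.reachset_mono Stmt16Aux.subset_limcl)
end

section
/- Acceleration is sound: let V_z be a VAS with one zero-test, f = (0, ω, ..., ω), and x, y ∈ {0} × ℕ_ω^{d−1} with x ≤ y and y ∈ ↓_f Lim Post*(V_z(x)). Define (x∇y)(i) = ω if x(i) < y(i) and (x∇y)(i) = x(i) if x(i) = y(i). Then x∇y ∈ ↓_f Lim Post*(V_z(x)). -/
/-- The filter `f = (0, ω, …, ω)`. -/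
def fZero (d : ℕ) [NeZero d] : Vec d := fun i => if i = 0 then (0 : ℕ∞) else ⊤

/-- The acceleration `x∇y`: `ω` on components where `x(i) < y(i)`, `x(i)` where `x(i) = y(i)`. -/
def nabla {d : ℕ} (x y : Vec d) : Vec d := fun i => if x i < y i then ⊤ else x i

section Aux

variable {α : Type} {d : ℕ} [NeZero d] (V : VAS0 α d)

lemma stepVec_top {v : Fin d → ℤ} {a b : Vec d} (h : StepVec v a b) (i : Fin d) :
    b i = ⊤ ↔ a i = ⊤ := by
  rcases h i with ⟨h1, h2⟩ | ⟨m, n, hm, hn, _⟩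
  · simp [h1, h2]
  · simp [hm, hn]

lemma stepOm_top {a b : Vec d} {t : Option α} (h : V.StepOm a t b) (i : Fin d) :
    b i = ⊤ ↔ a i = ⊤ := by
  cases t with
  | none => exact stepVec_top h.2 i
  | some a => exact stepVec_top h i

lemma reach_top {a b : Vec d} {w} (h : V.ReachWOm a w b) (i : Fin d) :
    b i = ⊤ ↔ a i = ⊤ := by
  induction w generalizing a with
  | nil => cases h; exact Iff.rfl
  | cons t w ih => obtain ⟨z, h1, h2⟩ := h; rw [ih h2, stepOm_top V h1]

lemma stepVec_translate {v : Fin d → ℤ} {a b : Vec d} (c : Fin d → ℕ) (h : StepVec v a b) :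
    StepVec v (fun i => a i + c i) (fun i => b i + c i) := by
  intro i
  rcases h i with ⟨h1, h2⟩ | ⟨m, n, hm, hn, he⟩
  · left; simp [h1, h2]
  · right
    refine ⟨m + c i, n + c i, ?_, ?_, by push_cast; omega⟩
    · simp only [hm]; push_cast; ring
    · simp only [hn]; push_cast; ring

lemma stepOm_translate {a b : Vec d} {t : Option α} (c : Fin d → ℕ) (hc : c 0 = 0)
    (h : V.StepOm a t b) : V.StepOm (fun i => a i + c i) t (fun i => b i + c i) := by
  cases t with
  | some a => exact stepVec_translate c h
  | none => exact ⟨by simp [h.1, hc], stepVec_translate c h.2⟩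

lemma reach_translate {a b : Vec d} {w} (c : Fin d → ℕ) (hc : c 0 = 0)
    (h : V.ReachWOm a w b) : V.ReachWOm (fun i => a i + c i) w (fun i => b i + c i) := by
  induction w generalizing a with
  | nil => cases h; rfl
  | cons t w ih =>
      obtain ⟨z, h1, h2⟩ := h
      exact ⟨_, stepOm_translate V c hc h1, ih h2⟩

lemma reach_append {a b c' : Vec d} {w1 w2} (h1 : V.ReachWOm a w1 b)
    (h2 : V.ReachWOm b w2 c') : V.ReachWOm a (w1 ++ w2) c' := by
  induction w1 generalizing a with
  | nil => cases h1; exact h2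
  | cons t w ih => obtain ⟨z, hs, hr⟩ := h1; exact ⟨z, hs, ih hr⟩

lemma reach_iterate {x u : Vec d} {w} (e : Fin d → ℕ) (he0 : e 0 = 0)
    (hu : V.ReachWOm x w u) (hue : ∀ i, u i = x i + (e i : ℕ∞)) (k : ℕ) :
    ∃ w', V.ReachWOm x w' (fun i => x i + ((k * e i : ℕ) : ℕ∞)) := by
  induction k with
  | zero =>
      refine ⟨[], ?_⟩
      have : (fun i => x i + ((0 * e i : ℕ) : ℕ∞)) = x := by
        funext i; simp
      rw [this]; rfl
  | succ k ih =>
      obtain ⟨w', hw'⟩ := ih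
      have ht := reach_translate V (fun i => k * e i) (by simp [he0]) hu
      have hfun : (fun i => u i + ((k * e i : ℕ) : ℕ∞))
          = fun i => x i + (((k + 1) * e i : ℕ) : ℕ∞) := by
        funext i
        rw [hue i, show (k + 1) * e i = e i + k * e i from by ring, Nat.cast_add, add_assoc]
      rw [hfun] at ht
      exact ⟨w' ++ w, reach_append V hw' ht⟩

end Aux

/-- Acceleration is sound: if `x ≤ y` are in `{0} × ℕ_ω^{d-1}` and
`y ∈ ↓_f Lim Post*(V_z(x))`, then `x∇y ∈ ↓_f Lim Post*(V_z(x))`. -/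
theorem stmt_18 {α : Type} [Finite α] {d : ℕ} [NeZero d] (V : VAS0 α d)
    (hz : V.δz 0 = 0) (x y : Vec d) (hx : x 0 = 0) (hy : y 0 = 0) (hxy : x ≤ y)
    (h : y ∈ fdown (fZero d) (LimCl (V.PostStarOm x))) :
    nabla x y ∈ fdown (fZero d) (LimCl (V.PostStarOm x)) := by
  classical
  obtain ⟨z, ⟨⟨s, hsM, hsc⟩, hzf⟩, hyz⟩ := h
  have hz0 : z 0 = 0 := by
    have := hzf 0 (by simp [fZero])
    simpa [fZero] using this
  set B : ℕ := (Finset.univ.sup fun i => (x i).toNat) + 1 with hB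
  have hBx : ∀ i : Fin d, (x i).toNat < B := by
    intro i
    have : (x i).toNat ≤ Finset.univ.sup fun j => (x j).toNat :=
      Finset.le_sup (f := fun j => (x j).toNat) (Finset.mem_univ i)
    omega
  -- eventually s n 0 = 0
  have h0 : ∃ N0, ∀ n ≥ N0, s n 0 = 0 := by
    rcases hsc 0 with ⟨N0, hN0⟩ | ⟨htop, _, _⟩
    · exact ⟨N0, fun n hn => by simpa [hz0] using hN0 n hn⟩
    · rw [hz0] at htop; exact absurd htop (by simp)
  obtain ⟨N0, hN0⟩ := h0
  -- per-component eventual bounds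
  have hP : ∀ i : Fin d, ∃ N, ∀ n ≥ N,
      (y i ≠ ⊤ → y i ≤ s n i) ∧ (y i = ⊤ → (B : ℕ∞) ≤ s n i) := by
    intro i
    rcases hsc i with ⟨N, hN⟩ | ⟨htop, _, hBnd⟩
    · refine ⟨N, fun n hn => ?_⟩
      have hsz : s n i = z i := hN n hn
      refine ⟨fun _ => ?_, fun hyt => ?_⟩
      · rw [hsz]; exact hyz i
      · rw [hsz]
        have : (⊤ : ℕ∞) ≤ z i := hyt ▸ hyz i
        exact le_trans le_top this
    · obtain ⟨N, hN⟩ := hBnd (max B (y i).toNat)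
      refine ⟨N, fun n hn => ⟨fun hyf => ?_, fun _ => ?_⟩⟩
      · calc y i = ((y i).toNat : ℕ∞) := (ENat.coe_toNat hyf).symm
          _ ≤ ((max B (y i).toNat : ℕ) : ℕ∞) := by exact_mod_cast le_max_right _ _
          _ ≤ s n i := hN n hn
      · calc (B : ℕ∞) ≤ ((max B (y i).toNat : ℕ) : ℕ∞) := by exact_mod_cast le_max_left _ _
          _ ≤ s n i := hN n hn
  choose Ns hNs using hP
  set N : ℕ := max N0 (Finset.univ.sup Ns) with hNdef
  set u : Vec d := s N with hudef
  have hPi : ∀ i : Fin d, (y i ≠ ⊤ → y i ≤ u i) ∧ (y i = ⊤ → (B : ℕ∞) ≤ u i) := by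
    intro i
    exact hNs i N (le_trans (Finset.le_sup (Finset.mem_univ i)) (le_max_right _ _))
  have hu0 : u 0 = 0 := hN0 N (le_max_left _ _)
  obtain ⟨w0, hw0⟩ := hsM N
  have htop : ∀ i, u i = ⊤ ↔ x i = ⊤ := reach_top V hw0
  have hxu : ∀ i, x i ≤ u i := by
    intro i
    by_cases hxt : x i = ⊤
    · rw [hxt, (htop i).2 hxt]
    · by_cases hyt : y i = ⊤
      · calc x i = ((x i).toNat : ℕ∞) := (ENat.coe_toNat hxt).symm
          _ ≤ (B : ℕ∞) := by exact_mod_cast (hBx i).le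
          _ ≤ u i := (hPi i).2 hyt
      · exact le_trans (hxy i) ((hPi i).1 hyt)
  have hI : ∀ i, x i < y i → x i < u i := by
    intro i hlt
    have hxt : x i ≠ ⊤ := (lt_of_lt_of_le hlt le_top).ne
    by_cases hyt : y i = ⊤
    · calc x i = ((x i).toNat : ℕ∞) := (ENat.coe_toNat hxt).symm
        _ < (B : ℕ∞) := by exact_mod_cast hBx i
        _ ≤ u i := (hPi i).2 hyt
    · exact lt_of_lt_of_le hlt ((hPi i).1 hyt)
  set e : Fin d → ℕ := fun i => (u i).toNat - (x i).toNat with hedef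
  have hue : ∀ i, u i = x i + (e i : ℕ∞) := by
    intro i
    by_cases hxt : x i = ⊤
    · rw [hxt, (htop i).2 hxt, top_add]
    · have hut : u i ≠ ⊤ := fun hh => hxt ((htop i).1 hh)
      obtain ⟨m, hm⟩ : ∃ m : ℕ, x i = (m : ℕ∞) := ⟨(x i).toNat, (ENat.coe_toNat hxt).symm⟩
      obtain ⟨n, hn⟩ : ∃ n : ℕ, u i = (n : ℕ∞) := ⟨(u i).toNat, (ENat.coe_toNat hut).symm⟩
      have hmn : m ≤ n := by
        have := hxu i; rw [hm, hn] at this; exact_mod_cast this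
      have he' : e i = n - m := by simp [hedef, hm, hn]
      rw [hm, hn, he']
      exact_mod_cast (by omega : n = m + (n - m))
  have he0 : e 0 = 0 := by simp [hedef, hu0, hx]
  have heI : ∀ i, x i < y i → 1 ≤ e i := by
    intro i hlt
    have hxt : x i ≠ ⊤ := (lt_of_lt_of_le hlt le_top).ne
    have hut : u i ≠ ⊤ := fun hh => hxt ((htop i).1 hh)
    have hsl : x i < u i := hI i hlt
    rw [← ENat.coe_toNat hxt, ← ENat.coe_toNat hut] at hsl
    have : (x i).toNat < (u i).toNat := by exact_mod_cast hsl
    simp only [hedef]; omega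
  -- the accelerated sequence and its limit
  refine ⟨fun i => if e i = 0 then x i else ⊤,
    ⟨⟨fun k => fun i => x i + ((k * e i : ℕ) : ℕ∞), fun k => ?_, ?_⟩, ?_⟩, ?_⟩
  · exact reach_iterate V e he0 hw0 hue k
  · intro i
    by_cases he : e i = 0
    · exact Or.inl ⟨0, fun n _ => by simp [he]⟩
    · by_cases hxt : x i = ⊤
      · exact Or.inl ⟨0, fun n _ => by simp [he, hxt]⟩
      · refine Or.inr ⟨by simp [he], ?_, ?_⟩
        · have : {n : ℕ | x i + ((n * e i : ℕ) : ℕ∞) ≠ ⊤} = Set.univ := by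
            apply Set.eq_univ_of_forall
            intro n
            simp only [Set.mem_setOf_eq]
            exact WithTop.add_ne_top.2 ⟨hxt, by exact_mod_cast ENat.coe_ne_top (n * e i)⟩
          rw [this]; exact Set.infinite_univ
        · intro B'
          refine ⟨B', fun n hn => ?_⟩
          calc (B' : ℕ∞) ≤ ((n * e i : ℕ) : ℕ∞) := by
                exact_mod_cast le_trans hn (Nat.le_mul_of_pos_right n (by omega))
            _ ≤ x i + ((n * e i : ℕ) : ℕ∞) := le_add_self
  · intro i hfi
    have hi0 : i = 0 := by
      by_contra hne
      simp [fZero, hne] at hfi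
    subst hi0
    simp [fZero, he0, hx]
  · intro i
    simp only [nabla]
    by_cases hlt : x i < y i
    · rw [if_pos hlt, if_neg (by have := heI i hlt; omega)]
    · rw [if_neg hlt]
      split
      · exact le_refl _
      · exact le_top
end

section
/- For a VAS with one zero-test V_z of dimension d, with initial state in {0} × ℕ^{d−1}, δ(a_z) ∈ {0} × ℤ^{d−1}, and f = (0, ω, ..., ω): if R is a basis of the filtered cover ↓_f Post*(V_z), then the cover of V_z equals the union over r ∈ R of the downward closures of the reachability sets of the underlying VAS (without the zero-test) started at r: Cover(V_z) = ⋃_{r ∈ R} ↓ Post*(V(r)). -/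
/-- The reachability set of a `VAS0` (on `ℕ^d`, from its initial state). -/
def VAS0.PostStar0 {α : Type} {d : ℕ} [NeZero d] (V : VAS0 α d) : Set (Fin d → ℕ) :=
  {y | ∃ w : List (Option α), V.ReachW V.init w y}

private lemma reachW_append {α : Type} {d : ℕ} [NeZero d] (V : VAS0 α d) :
    ∀ (w1 : List (Option α)) {x z : Fin d → ℕ} (w2 : List (Option α)) {y : Fin d → ℕ},
      V.ReachW x w1 z → V.ReachW z w2 y → V.ReachW x (w1 ++ w2) y := by
  intro w1
  induction w1 with
  | nil =>
    intro x z w2 y h1 h2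
    obtain rfl : x = z := h1
    exact h2
  | cons t w ih =>
    intro x z w2 y h1 h2
    obtain ⟨m, hs, hr⟩ := h1
    exact ⟨m, hs, ih w2 hr h2⟩

private lemma splitRun {α : Type} {d : ℕ} [NeZero d] (V : VAS0 α d) (hz : V.δz 0 = 0) :
    ∀ (w : List (Option α)) (x y : Fin d → ℕ), V.ReachW x w y →
      (∃ w2 : List α, w = w2.map some) ∨
      (∃ (z : Fin d → ℕ) (w1 : List (Option α)) (w2 : List α),
        z 0 = 0 ∧ V.ReachW x w1 z ∧ V.ReachW z (w2.map some) y) := by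
  intro w
  induction w with
  | nil => intro x y _; exact Or.inl ⟨[], rfl⟩
  | cons t w ih =>
    intro x y h
    obtain ⟨m, hs, hr⟩ := h
    rcases ih m y hr with ⟨w2, rfl⟩ | ⟨zz, w1, w2, h0, h1, h2⟩
    · cases t with
      | some a => exact Or.inl ⟨a :: w2, rfl⟩
      | none =>
        obtain ⟨hx0, hst⟩ := hs
        have hm0 : m 0 = 0 := by
          have := hst 0
          rw [hx0, hz] at this
          omega
        exact Or.inr ⟨m, [none], w2, hm0, ⟨m, ⟨hx0, hst⟩, rfl⟩, hr⟩
    · exact Or.inr ⟨zz, t :: w1, w2, h0, ⟨m, hs, h1⟩, h2⟩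

private lemma liftOm {α : Type} {d : ℕ} [NeZero d] (V : VAS0 α d) :
    ∀ (w : List α) {z y : Fin d → ℕ} {r : Vec d},
      V.ReachW z (w.map some) y → toOmega z ≤ r →
      ∃ y' : Vec d, V.ReachWOm r (w.map some) y' ∧ toOmega y ≤ y' := by
  intro w
  induction w with
  | nil =>
    intro z y r h hle
    obtain rfl : z = y := h
    exact ⟨r, rfl, hle⟩
  | cons a w ih =>
    intro z y r h hle
    obtain ⟨m, hs, hr⟩ := h
    have hs' : ∀ i, (m i : ℤ) = z i + V.δ a i := hs
    set r1 : Vec d := fun i =>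
      if r i = ⊤ then ⊤ else ((((r i).toNat : ℤ) + V.δ a i).toNat : ℕ∞) with hr1
    have key : ∀ i, r i ≠ ⊤ →
        (0 : ℤ) ≤ ((r i).toNat : ℤ) + V.δ a i ∧ z i ≤ (r i).toNat := by
      intro i hi
      have hcoe : ((r i).toNat : ℕ∞) = r i := ENat.coe_toNat hi
      have hzi : (z i : ℕ∞) ≤ r i := hle i
      rw [← hcoe] at hzi
      have hz' : z i ≤ (r i).toNat := by exact_mod_cast hzi
      have := hs' i
      constructor
      · omega
      · exact hz'
    have hstep : StepVec (V.δ a) r r1 := by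
      intro i
      by_cases hi : r i = ⊤
      · exact Or.inl ⟨hi, by simp [hr1, hi]⟩
      · obtain ⟨hnn, hzle⟩ := key i hi
        refine Or.inr ⟨(r i).toNat, (((r i).toNat : ℤ) + V.δ a i).toNat,
          (ENat.coe_toNat hi).symm, by simp [hr1, hi], ?_⟩
        rw [Int.toNat_of_nonneg hnn]
    have hle1 : toOmega m ≤ r1 := by
      intro i
      by_cases hi : r i = ⊤
      · simp [hr1, hi, le_top]
      · obtain ⟨hnn, hzle⟩ := key i hi
        have := hs' i
        have hm : m i ≤ (((r i).toNat : ℤ) + V.δ a i).toNat := by omega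
        simp only [hr1, hi, if_false, toOmega]
        exact_mod_cast hm
    obtain ⟨y', h1, h2⟩ := ih hr hle1
    exact ⟨y', ⟨r1, hstep, h1⟩, h2⟩

private lemma groundRun {α : Type} {d : ℕ} [NeZero d] (V : VAS0 α d) :
    ∀ (w : List α) (r y : Vec d) (x : Fin d → ℕ),
      V.ReachWOm r (w.map some) y → toOmega x ≤ y →
      ∃ B : ℕ, ∀ z : Fin d → ℕ,
        (∀ i, (r i = ⊤ → B ≤ z i) ∧ (r i ≠ ⊤ → r i ≤ (z i : ℕ∞))) →
        ∃ y' : Fin d → ℕ, V.ReachW z (w.map some) y' ∧ x ≤ y' := by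
  intro w
  induction w with
  | nil =>
    intro r y x h hxy
    obtain rfl : r = y := h
    refine ⟨Finset.univ.sup x, fun z hyp => ⟨z, rfl, fun i => ?_⟩⟩
    by_cases hi : r i = ⊤
    · exact le_trans (Finset.le_sup (Finset.mem_univ i)) ((hyp i).1 hi)
    · have h1 : (x i : ℕ∞) ≤ r i := hxy i
      have h2 : r i ≤ (z i : ℕ∞) := (hyp i).2 hi
      exact_mod_cast le_trans h1 h2
  | cons a w ih =>
    intro r y x h hxy
    obtain ⟨r1, hs, hr⟩ := h
    have hs' : StepVec (V.δ a) r r1 := hs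
    obtain ⟨B1, hB1⟩ := ih r1 y x hr hxy
    set C := Finset.univ.sup fun i => (V.δ a i).natAbs with hC
    refine ⟨B1 + C, fun z hyp => ?_⟩
    set z1 : Fin d → ℕ := fun i => ((z i : ℤ) + V.δ a i).toNat with hz1
    have hCi : ∀ i, (V.δ a i).natAbs ≤ C := fun i =>
      Finset.le_sup (f := fun i => (V.δ a i).natAbs) (Finset.mem_univ i)
    have key : ∀ i, (0 : ℤ) ≤ (z i : ℤ) + V.δ a i ∧
        (r1 i = ⊤ → B1 ≤ z1 i) ∧ (r1 i ≠ ⊤ → r1 i ≤ (z1 i : ℕ∞)) := by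
      intro i
      rcases hs' i with ⟨hrt, hr1t⟩ | ⟨m, n, hm, hn, heq⟩
      · have hB : B1 + C ≤ z i := (hyp i).1 hrt
        have := hCi i
        refine ⟨by omega, fun _ => ?_, fun hne => absurd hr1t hne⟩
        simp only [hz1]
        omega
      · have hrne : r i ≠ ⊤ := by rw [hm]; exact ENat.coe_ne_top m
        have hzi : (m : ℕ∞) ≤ (z i : ℕ∞) := hm ▸ (hyp i).2 hrne
        have hzi' : m ≤ z i := by exact_mod_cast hzi
        have hnn : (0 : ℤ) ≤ (z i : ℤ) + V.δ a i := by omega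
        refine ⟨hnn, fun ht => absurd ht (hn ▸ ENat.coe_ne_top n), fun _ => ?_⟩
        rw [hn]
        have : n ≤ z1 i := by simp only [hz1]; omega
        exact_mod_cast this
    have hstep : V.Step z (some a) z1 := by
      intro i
      simp only [hz1]
      rw [Int.toNat_of_nonneg (key i).1]
    obtain ⟨y', h1, h2⟩ := hB1 z1 (fun i => (key i).2)
    exact ⟨y', ⟨z1, hstep, h1⟩, h2⟩

/-- If `R` is a (finite) basis of the filtered cover `↓_f Post*(V_z)` with
`f = (0, ω, …, ω)`, then the cover of `V_z` is the union, over `r ∈ R`, of the downward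
closures of the reachability sets of the underlying VAS (no zero-test) started at `r`. -/
theorem stmt_19 {α : Type} [Finite α] {d : ℕ} [NeZero d] (V : VAS0 α d)
    (hinit : V.init 0 = 0) (hz : V.δz 0 = 0)
    (R : Set (Vec d)) (hRfin : R.Finite)
    (hbasis : LimCl (fdown (fZero d) (toOmega '' V.PostStar0)) = dc R) :
    {x : Fin d → ℕ | ∃ y ∈ V.PostStar0, x ≤ y} =
      {x : Fin d → ℕ | ∃ r ∈ R, ∃ y : Vec d,
        (∃ w : List α, V.ReachWOm r (w.map some) y) ∧ toOmega x ≤ y} := by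
  ext x
  simp only [Set.mem_setOf_eq]
  constructor
  · rintro ⟨y, ⟨w, hw⟩, hxy⟩
    have main : ∃ (z : Fin d → ℕ) (w2 : List α),
        z ∈ V.PostStar0 ∧ z 0 = 0 ∧ V.ReachW z (w2.map some) y := by
      rcases splitRun V hz w V.init y hw with ⟨w2, rfl⟩ | ⟨z, w1, w2, h0, h1, h2⟩
      · exact ⟨V.init, w2, ⟨[], rfl⟩, hinit, hw⟩
      · exact ⟨z, w2, ⟨w1, h1⟩, h0, h2⟩
    obtain ⟨z, w2, hzmem, hz0, hrun⟩ := main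
    have hfilt : toOmega z ∈ filterSet (toOmega '' V.PostStar0) (fZero d) := by
      refine ⟨⟨z, hzmem, rfl⟩, fun i hi => ?_⟩
      have hi0 : i = 0 := by
        by_contra hne
        exact hi (by simp [fZero, hne])
      subst hi0
      simp [fZero, toOmega, hz0]
    have hlim : toOmega z ∈ LimCl (fdown (fZero d) (toOmega '' V.PostStar0)) :=
      ⟨fun _ => toOmega z, fun _ => ⟨toOmega z, hfilt, le_refl _⟩,
        fun i => Or.inl ⟨0, fun _ _ => rfl⟩⟩
    rw [hbasis] at hlim
    obtain ⟨r, hrR, hle⟩ := hlim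
    obtain ⟨y', hy', hyy'⟩ := liftOm V w2 hrun hle
    refine ⟨r, hrR, y', ⟨w2, hy'⟩, le_trans (fun i => ?_) hyy'⟩
    simp only [toOmega]
    exact_mod_cast hxy i
  · rintro ⟨r, hrR, y, ⟨w, hw⟩, hxy⟩
    have hrLim : r ∈ LimCl (fdown (fZero d) (toOmega '' V.PostStar0)) := by
      rw [hbasis]; exact ⟨r, hrR, le_refl r⟩
    obtain ⟨s, hsM, hconv⟩ := hrLim
    have hwit : ∀ n, ∃ zz : Fin d → ℕ, zz ∈ V.PostStar0 ∧ s n ≤ toOmega zz := by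
      intro n
      obtain ⟨v, hv, hle⟩ := hsM n
      obtain ⟨zz, hzz, rfl⟩ := hv.1
      exact ⟨zz, hzz, hle⟩
    have hfin : ∀ n i, s n i ≠ ⊤ := by
      intro n i
      obtain ⟨zz, _, hle⟩ := hwit n
      exact ne_top_of_le_ne_top (ENat.coe_ne_top (zz i)) (hle i)
    obtain ⟨B, hB⟩ := groundRun V w r y x hw hxy
    have hN : ∀ i, ∃ N, ∀ n ≥ N,
        (r i = ⊤ → (B : ℕ∞) ≤ s n i) ∧ (r i ≠ ⊤ → s n i = r i) := by
      intro i
      rcases hconv i with ⟨N, hNh⟩ | ⟨htop, _, hgrow⟩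
      · by_cases hri : r i = ⊤
        · exact absurd (hri ▸ hNh N (le_refl N)) (hfin N i)
        · exact ⟨N, fun n hn => ⟨fun h => absurd h hri, fun _ => hNh n hn⟩⟩
      · obtain ⟨N, hNh⟩ := hgrow B
        exact ⟨N, fun n hn => ⟨fun _ => hNh n hn, fun h => absurd htop h⟩⟩
    choose N hNs using hN
    set n0 := Finset.univ.sup N with hn0
    obtain ⟨zz, ⟨w0, hw0⟩, hle⟩ := hwit n0
    have hyp : ∀ i, (r i = ⊤ → B ≤ zz i) ∧ (r i ≠ ⊤ → r i ≤ (zz i : ℕ∞)) := by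
      intro i
      have hni := hNs i n0 (Finset.le_sup (f := N) (Finset.mem_univ i))
      constructor
      · intro h
        have h1 : (B : ℕ∞) ≤ (zz i : ℕ∞) := le_trans (hni.1 h) (hle i)
        exact_mod_cast h1
      · intro h
        exact le_trans (le_of_eq (hni.2 h).symm) (hle i)
    obtain ⟨y', hy', hxy'⟩ := hB zz hyp
    exact ⟨y', ⟨w0 ++ w.map some, reachW_append V w0 (w.map some) hw0 hy'⟩, hxy'⟩
end
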